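/- arXiv:1812.09534 — 2 statements merged into one kernel-verified Lean document; each statement's English description precedes it below -/
import Mathlib

section
/- Let L be a finite bounded lattice with 0 ≠ 1, n ≥ 2, and f : Lⁿ → L an n-ary aggregation function. Then for every x ∈ Lⁿ, f(x) = ⋁_{a ∈ Lⁿ_*} h_a(x), where Lⁿ_* = Lⁿ \ {(0,…,0), (1,…,1)} and the supremum is taken over all a ∈ Lⁿ_*. -/
open Classical in
/-- The characteristic function `χ_a`: `χ_a(x) = 1` if `x ≥ a` and `x ≠ 0`, else `0`. -/
noncomputable def chi {L : Type*} [Lattice L] [BoundedOrder L] (a x : L) : L :=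
  if a ≤ x ∧ x ≠ ⊥ then ⊤ else ⊥

open Classical in
/-- The binary operation `⊕_b`: `1` if both arguments are `1`, `0` if both are `0`,
and `b` otherwise. -/
noncomputable def oplus {L : Type*} [Lattice L] [BoundedOrder L] (b x y : L) : L :=
  if x = ⊤ ∧ y = ⊤ then ⊤ else if x = ⊥ ∧ y = ⊥ then ⊥ else b

/-- The iterated value `x₁ ⊕_b ⋯ ⊕_b xₙ`. -/
noncomputable def iterOplus {L : Type*} [Lattice L] [BoundedOrder L] (b : L) :
    ∀ {n : ℕ}, (Fin (n + 1) → L) → L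
  | 0, x => x 0
  | n + 1, x => oplus b (iterOplus b fun i : Fin (n + 1) => x i.castSucc) (x (Fin.last (n + 1)))

/-- An `n`-ary aggregation function on a bounded lattice: monotone (componentwise
order on tuples) and preserving the bottom and top tuples. -/
def IsAgg {L : Type*} [Lattice L] [BoundedOrder L] {n : ℕ}
    (A : (Fin n → L) → L) : Prop :=
  Monotone A ∧ A ⊥ = ⊥ ∧ A ⊤ = ⊤

open Classical in
/-- The function `h_a(x) = (⋀_{i ∈ J_a} χ_{aᵢ}(xᵢ)) ∧ (x₁ ⊕_{f(a)} ⋯ ⊕_{f(a)} xₙ)`,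
where `J_a = {i : aᵢ ≠ 0}`. -/
noncomputable def hAux {L : Type*} [Lattice L] [BoundedOrder L] {n : ℕ}
    (f : (Fin (n + 1) → L) → L) (a x : Fin (n + 1) → L) : L :=
  ((Finset.univ.filter fun i => a i ≠ ⊥).inf fun i => chi (a i) (x i)) ⊓ iterOplus (f a) x


lemma iterOplus_top' {L : Type*} [Lattice L] [BoundedOrder L] (b : L) :
    ∀ {n : ℕ} (x : Fin (n + 1) → L), (∀ i, x i = ⊤) → iterOplus b x = ⊤
  | 0, x, h => h 0
  | n + 1, x, h => by
      simp [iterOplus, oplus, iterOplus_top' b _ (fun i => h _), h (Fin.last _)]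

lemma iterOplus_bot' {L : Type*} [Lattice L] [BoundedOrder L] (h01 : (⊥ : L) ≠ ⊤) (b : L) :
    ∀ {n : ℕ} (x : Fin (n + 1) → L), (∀ i, x i = ⊥) → iterOplus b x = ⊥
  | 0, x, h => h 0
  | n + 1, x, h => by
      simp [iterOplus, oplus, iterOplus_bot' h01 b _ (fun i => h _), h (Fin.last _), h01]

lemma oplus_self {L : Type*} [Lattice L] [BoundedOrder L] (b z : L) :
    oplus b b z = b := by
  unfold oplus
  split_ifs with h1 h2
  · exact h1.1.symm
  · exact h2.1.symm
  · rfl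

lemma iterOplus_mid {L : Type*} [Lattice L] [BoundedOrder L] (h01 : (⊥ : L) ≠ ⊤) (b : L) :
    ∀ {n : ℕ}, 1 ≤ n → ∀ (x : Fin (n + 1) → L),
      ¬(∀ i, x i = ⊤) → ¬(∀ i, x i = ⊥) → iterOplus b x = b := by
  intro n
  induction n with
  | zero => omega
  | succ m ih =>
    intro _ x hT hB
    show oplus b (iterOplus b fun i : Fin (m + 1) => x i.castSucc) (x (Fin.last (m + 1))) = b
    by_cases hiT : ∀ i : Fin (m + 1), x i.castSucc = ⊤
    · have hlast : x (Fin.last (m + 1)) ≠ ⊤ := by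
        intro hl
        exact hT (fun i => Fin.lastCases hl hiT i)
      rw [iterOplus_top' b _ hiT]
      unfold oplus
      split_ifs with h1 h2
      · exact absurd h1.2 hlast
      · exact absurd h2.1 (Ne.symm h01)
      · rfl
    · by_cases hiB : ∀ i : Fin (m + 1), x i.castSucc = ⊥
      · have hlast : x (Fin.last (m + 1)) ≠ ⊥ := by
          intro hl
          exact hB (fun i => Fin.lastCases hl hiB i)
        rw [iterOplus_bot' h01 b _ hiB]
        unfold oplus
        split_ifs with h1 h2
        · exact absurd h1.1 h01
        · exact absurd h2.2 hlast
        · rfl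
      · rcases Nat.eq_zero_or_pos m with hm | hm
        · subst hm
          have h0T : x 0 ≠ ⊤ := fun h => hiT (fun i => by fin_cases i; exact h)
          have h0B : x 0 ≠ ⊥ := fun h => hiB (fun i => by fin_cases i; exact h)
          have hxe : iterOplus b (fun i : Fin 1 => x i.castSucc) = x 0 := rfl
          rw [hxe]
          unfold oplus
          split_ifs with h1 h2
          · exact absurd h1.1 h0T
          · exact absurd h2.1 h0B
          · rfl
        · rw [ih hm _ hiT hiB, oplus_self]

open Classical in
lemma hAux_le {L : Type*} [Lattice L] [BoundedOrder L] (h01 : (⊥ : L) ≠ ⊤) {n : ℕ}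
    (hn : 1 ≤ n) (f : (Fin (n + 1) → L) → L) (hf : IsAgg f) (a x : Fin (n + 1) → L) :
    hAux f a x ≤ f x := by
  by_cases hT : ∀ i, x i = ⊤
  · have hx : x = ⊤ := funext fun i => hT i
    rw [hx, hf.2.2]; exact le_top
  by_cases hB : ∀ i, x i = ⊥
  · calc hAux f a x ≤ iterOplus (f a) x := inf_le_right
    _ = ⊥ := iterOplus_bot' h01 _ _ hB
    _ ≤ f x := bot_le
  by_cases hchi : ∀ i ∈ Finset.univ.filter fun i => a i ≠ ⊥, a i ≤ x i ∧ x i ≠ ⊥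
  · have hax : a ≤ x := fun i => by
      by_cases hi : a i = ⊥
      · rw [hi]; exact bot_le
      · exact (hchi i (by simp [hi])).1
    calc hAux f a x ≤ iterOplus (f a) x := inf_le_right
    _ = f a := iterOplus_mid h01 _ hn _ hT hB
    _ ≤ f x := hf.1 hax
  · push_neg at hchi
    obtain ⟨i, hi, hbad⟩ := hchi
    have h1 : chi (a i) (x i) = ⊥ := by
      unfold chi
      rw [if_neg (fun h => h.2 (hbad h.1))]
    calc hAux f a x ≤ (Finset.univ.filter fun i => a i ≠ ⊥).inf
            (fun i => chi (a i) (x i)) := inf_le_left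
    _ ≤ chi (a i) (x i) := Finset.inf_le hi
    _ = ⊥ := h1
    _ ≤ f x := bot_le

open Classical in
/-- Let `L` be a finite bounded lattice with `0 ≠ 1`, `n ≥ 2` and `f : Lⁿ → L` an
aggregation function.  Then `f(x) = ⋁_{a ∈ Lⁿ_*} h_a(x)` for every `x ∈ Lⁿ`, where
`Lⁿ_* = Lⁿ \ {(0,…,0), (1,…,1)}`.
(A tuple of length `n ≥ 2` is written as `x : Fin (n+1) → L` with `n ≥ 1`.) -/
theorem agg_eq_sup_hAux {L : Type*} [Lattice L] [BoundedOrder L] [Fintype L]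
    (h01 : (⊥ : L) ≠ ⊤) (n : ℕ) (hn : 1 ≤ n)
    (f : (Fin (n + 1) → L) → L) (hf : IsAgg f) (x : Fin (n + 1) → L) :
    f x = (Finset.univ.filter fun a : Fin (n + 1) → L => a ≠ ⊥ ∧ a ≠ ⊤).sup
      (fun a => hAux f a x) := by
  apply le_antisymm
  · by_cases hxB : x = ⊥
    · rw [hxB, hf.2.1]; exact bot_le
    by_cases hxT : x = ⊤
    · subst hxT
      rw [hf.2.2]
      set a : Fin (n + 1) → L := fun i => if i = 0 then ⊤ else ⊥ with ha
      have hlast : (Fin.last n : Fin (n + 1)) ≠ 0 := by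
        simp [Fin.ext_iff]; omega
      have haB : a ≠ ⊥ := by
        intro h
        have := congrFun h 0
        simp [ha] at this
        exact h01 this.symm
      have haT : a ≠ ⊤ := by
        intro h
        have := congrFun h (Fin.last n)
        simp [ha, hlast] at this
        exact h01 this
      have hmem : a ∈ Finset.univ.filter fun a : Fin (n + 1) → L => a ≠ ⊥ ∧ a ≠ ⊤ := by
        simp [haB, haT]
      have hval : hAux f a ⊤ = ⊤ := by
        unfold hAux
        have h1 : ((Finset.univ.filter fun i => a i ≠ ⊥).inf
            fun i => chi (a i) ((⊤ : Fin (n + 1) → L) i)) = ⊤ := by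
          refine le_antisymm le_top (Finset.le_inf fun i _ => ?_)
          unfold chi
          rw [if_pos ⟨le_top, fun h => h01 h.symm⟩]
        rw [h1, iterOplus_top' (f a) (⊤ : Fin (n + 1) → L) (fun i => rfl), top_inf_eq]
      calc (⊤ : L) = hAux f a ⊤ := hval.symm
      _ ≤ _ := Finset.le_sup (f := fun a => hAux f a ⊤) hmem
    · have hmem : x ∈ Finset.univ.filter fun a : Fin (n + 1) → L => a ≠ ⊥ ∧ a ≠ ⊤ := by
        simp [hxB, hxT]
      refine le_trans ?_ (Finset.le_sup (f := fun a => hAux f a x) hmem)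
      have h1 : ((Finset.univ.filter fun i => x i ≠ ⊥).inf
          fun i => chi (x i) (x i)) = ⊤ := by
        refine le_antisymm le_top (Finset.le_inf fun i hi => ?_)
        have hxi : x i ≠ ⊥ := (Finset.mem_filter.mp hi).2
        unfold chi
        rw [if_pos ⟨le_refl _, hxi⟩]
      have h2 : iterOplus (f x) x = f x :=
        iterOplus_mid h01 _ hn _ (fun h => hxT (funext h)) (fun h => hxB (funext h))
      show f x ≤ ((Finset.univ.filter fun i => x i ≠ ⊥).inf
          fun i => chi (x i) (x i)) ⊓ iterOplus (f x) x
      rw [h1, h2, top_inf_eq]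
  · exact Finset.sup_le fun a _ => hAux_le h01 hn f hf a x
end

section
/- Let L be a finite bounded lattice with 0 ≠ 1. Then every aggregation function on L (of any arity) belongs to the clone generated by the lattice operations ∨ and ∧ together with the unary functions χ_a for all a ∈ L and the binary functions ⊕_b for all b ∈ L; that is, this clone equals the aggregation clone of L, the set of all aggregation functions on L of all arities. -/
/-- Membership in the clone generated by a set `F` of finitary operations on `A`
(operations are recorded together with their arities): the smallest set of operations
containing `F` and all projections and closed under composition. -/
inductive GenClone {A : Type*} (F : Set ((n : ℕ) × ((Fin n → A) → A))) :
    ∀ {n : ℕ}, ((Fin n → A) → A) → Prop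
  | mem (p : (n : ℕ) × ((Fin n → A) → A)) : p ∈ F → GenClone F p.2
  | proj {n : ℕ} (i : Fin n) : GenClone F fun x => x i
  | comp {k n : ℕ} (f : (Fin k → A) → A) (g : Fin k → (Fin n → A) → A) :
      GenClone F f → (∀ i, GenClone F (g i)) → GenClone F fun x => f fun i => g i x

open scoped Classical

set_option linter.unusedSectionVars false
set_option linter.unusedVariables false
section Aux
variable {L : Type*} [Lattice L] [BoundedOrder L]
variable {F : Set ((n : ℕ) × ((Fin n → L) → L))}

lemma chi_mono (a : L) : Monotone (chi a) := by
  intro x y hxy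
  unfold chi
  split_ifs with h1 h2
  · exact le_rfl
  · exact absurd ⟨h1.1.trans hxy, fun hy => h1.2 (le_bot_iff.mp (hy ▸ hxy))⟩ h2
  · exact bot_le
  · exact le_rfl

lemma oplus_mono (b : L) {x x' y y' : L} (h01 : (⊥ : L) ≠ ⊤)
    (hx : x ≤ x') (hy : y ≤ y') : oplus b x y ≤ oplus b x' y' := by
  by_cases hT : x' = ⊤ ∧ y' = ⊤
  · have : oplus b x' y' = ⊤ := by simp [oplus, hT]
    rw [this]; exact le_top
  · by_cases hB : x = ⊥ ∧ y = ⊥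
    · obtain ⟨rfl, rfl⟩ := hB
      have : oplus b ⊥ ⊥ = ⊥ := by
        rw [oplus, if_neg (fun h => h01 h.1), if_pos ⟨rfl, rfl⟩]
      rw [this]; exact bot_le
    · have hxT : ¬(x = ⊤ ∧ y = ⊤) := by
        rintro ⟨rfl, rfl⟩
        exact hT ⟨top_le_iff.mp hx, top_le_iff.mp hy⟩
      have hx'B : ¬(x' = ⊥ ∧ y' = ⊥) := by
        rintro ⟨rfl, rfl⟩
        exact hB ⟨le_bot_iff.mp hx, le_bot_iff.mp hy⟩
      have e1 : oplus b x y = b := by rw [oplus, if_neg hxT, if_neg hB]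
      have e2 : oplus b x' y' = b := by rw [oplus, if_neg hT, if_neg hx'B]
      rw [e1, e2]

lemma clSup (hsup : GenClone F (fun x : Fin 2 → L => x 0 ⊔ x 1))
    {n : ℕ} {f g : (Fin n → L) → L} (hf : GenClone F f) (hg : GenClone F g) :
    GenClone F (fun x => f x ⊔ g x) := by
  have := GenClone.comp (fun y : Fin 2 → L => y 0 ⊔ y 1) ![f, g] hsup
    (by intro i; fin_cases i <;> simpa)
  simpa using this

lemma clInf (hinf : GenClone F (fun x : Fin 2 → L => x 0 ⊓ x 1))
    {n : ℕ} {f g : (Fin n → L) → L} (hf : GenClone F f) (hg : GenClone F g) :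
    GenClone F (fun x => f x ⊓ g x) := by
  have := GenClone.comp (fun y : Fin 2 → L => y 0 ⊓ y 1) ![f, g] hinf
    (by intro i; fin_cases i <;> simpa)
  simpa using this

lemma clOplus (hop : ∀ b : L, GenClone F (fun x : Fin 2 → L => oplus b (x 0) (x 1)))
    (b : L) {n : ℕ} {f g : (Fin n → L) → L} (hf : GenClone F f) (hg : GenClone F g) :
    GenClone F (fun x => oplus b (f x) (g x)) := by
  have := GenClone.comp (fun y : Fin 2 → L => oplus b (y 0) (y 1)) ![f, g] (hop b)
    (by intro i; fin_cases i <;> simpa)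
  simpa using this

lemma clChi (hchi : ∀ a : L, GenClone F (fun x : Fin 1 → L => chi a (x 0)))
    (a : L) {n : ℕ} (k : Fin n) : GenClone F (fun x => chi a (x k)) := by
  have := GenClone.comp (fun y : Fin 1 → L => chi a (y 0)) (fun _ => fun x => x k)
    (hchi a) (fun _ => GenClone.proj k)
  exact this

lemma clSup' (hsup : GenClone F (fun x : Fin 2 → L => x 0 ⊔ x 1))
    {ι : Type*} {n : ℕ} (s : Finset ι) (hs : s.Nonempty)
    (f : ι → (Fin n → L) → L) (hf : ∀ i ∈ s, GenClone F (f i)) :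
    GenClone F (fun x => s.sup' hs fun i => f i x) := by
  induction hs using Finset.Nonempty.cons_induction with
  | singleton a => simpa using hf a (by simp)
  | cons a s ha hs ih =>
      have h1 : GenClone F (f a) := hf a (by simp)
      have h2 := ih (fun i hi => hf i (by simp [hi]))
      have h3 := clSup hsup h1 h2
      have heq : (fun x => (Finset.cons a s ha).sup' (Finset.cons_nonempty ha) fun i => f i x)
          = fun x => f a x ⊔ s.sup' hs fun i => f i x :=
        funext fun x => Finset.sup'_cons hs _
      rw [heq]
      exact h3

lemma clInf' (hinf : GenClone F (fun x : Fin 2 → L => x 0 ⊓ x 1))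
    {ι : Type*} {n : ℕ} (s : Finset ι) (hs : s.Nonempty)
    (f : ι → (Fin n → L) → L) (hf : ∀ i ∈ s, GenClone F (f i)) :
    GenClone F (fun x => s.inf' hs fun i => f i x) := by
  induction hs using Finset.Nonempty.cons_induction with
  | singleton a => simpa using hf a (by simp)
  | cons a s ha hs ih =>
      have h1 : GenClone F (f a) := hf a (by simp)
      have h2 := ih (fun i hi => hf i (by simp [hi]))
      have h3 := clInf hinf h1 h2
      have heq : (fun x => (Finset.cons a s ha).inf' (Finset.cons_nonempty ha) fun i => f i x)
          = fun x => f a x ⊓ s.inf' hs fun i => f i x :=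
        funext fun x => Finset.inf'_cons hs _
      rw [heq]
      exact h3

lemma ind_clone (h01 : (⊥ : L) ≠ ⊤)
    (hinf : GenClone F (fun x : Fin 2 → L => x 0 ⊓ x 1))
    (hchi : ∀ a : L, GenClone F (fun x : Fin 1 → L => chi a (x 0)))
    {n : ℕ} (c : Fin n → L) (hc : c ≠ ⊥) :
    GenClone F (fun x => if c ≤ x then (⊤ : L) else ⊥) := by
  have hex : ∃ j, c j ≠ ⊥ := by
    by_contra h
    push_neg at h
    exact hc (funext fun i => h i)
  obtain ⟨j0, hj0⟩ := hex
  set sel : Fin n → Fin n := fun i => if c i = ⊥ then j0 else i with hsel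
  have hselne : ∀ i, c (sel i) ≠ ⊥ := by
    intro i
    by_cases h : c i = ⊥ <;> simp [hsel, h, hj0]
  have hne : (Finset.univ : Finset (Fin n)).Nonempty := ⟨j0, Finset.mem_univ j0⟩
  have key : ∀ x, (Finset.univ.inf' hne fun i => chi (c (sel i)) (x (sel i)))
      = if c ≤ x then (⊤ : L) else ⊥ := by
    intro x
    by_cases hcx : c ≤ x
    · rw [if_pos hcx]
      refine le_antisymm le_top (Finset.le_inf' _ _ fun i _ => ?_)
      have : chi (c (sel i)) (x (sel i)) = ⊤ := by
        rw [chi, if_pos]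
        refine ⟨hcx _, fun hb => hselne i ?_⟩
        have := hcx (sel i)
        rw [hb] at this
        exact le_bot_iff.mp this
      rw [this]
    · rw [if_neg hcx]
      rw [Pi.le_def] at hcx
      push_neg at hcx
      obtain ⟨i, hi⟩ := hcx
      have hib : c i ≠ ⊥ := fun h => hi (h ▸ bot_le)
      refine le_bot_iff.mp ?_
      have hv : chi (c (sel i)) (x (sel i)) = ⊥ := by
        have hs : sel i = i := by simp [hsel, hib]
        rw [hs, chi, if_neg]
        intro h
        exact hi h.1
      calc (Finset.univ.inf' hne fun i => chi (c (sel i)) (x (sel i)))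
          ≤ chi (c (sel i)) (x (sel i)) := Finset.inf'_le _ (Finset.mem_univ i)
        _ = ⊥ := hv
  have hgen : GenClone F (fun x => Finset.univ.inf' hne fun i => chi (c (sel i)) (x (sel i))) :=
    clInf' hinf _ hne _ (fun i _ => clChi hchi (c (sel i)) (sel i))
  have heq : (fun x => Finset.univ.inf' hne fun i => chi (c (sel i)) (x (sel i)))
      = (fun x => if c ≤ x then (⊤ : L) else ⊥) := funext key
  rwa [heq] at hgen

end Aux

section Aux2
variable {L : Type*} [Lattice L] [BoundedOrder L]
variable {F : Set ((n : ℕ) × ((Fin n → L) → L))}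

lemma isAgg_genclone (h01 : (⊥ : L) ≠ ⊤) [Fintype L]
    (hsup : GenClone F (fun x : Fin 2 → L => x 0 ⊔ x 1))
    (hinf : GenClone F (fun x : Fin 2 → L => x 0 ⊓ x 1))
    (hchi : ∀ a : L, GenClone F (fun x : Fin 1 → L => chi a (x 0)))
    (hop : ∀ b : L, GenClone F (fun x : Fin 2 → L => oplus b (x 0) (x 1)))
    {n : ℕ} {A : (Fin n → L) → L} (hA : IsAgg A) : GenClone F A := by
  obtain ⟨hmono, hbot, htop⟩ := hA
  match n, A, hmono, hbot, htop with
  | 0, A, hmono, hbot, htop =>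
      exfalso
      have hbt : (⊥ : Fin 0 → L) = ⊤ := funext fun i => i.elim0
      exact h01 (by rw [← hbot, hbt, htop])
  | (m + 1), A, hmono, hbot, htop =>
      haveI : Nonempty L := ⟨⊥⟩
      have htopne : (⊤ : Fin (m + 1) → L) ≠ ⊥ := by
        intro h
        exact h01 (congrFun h 0).symm
      -- the indicator of the top tuple
      set E : (Fin (m + 1) → L) → L :=
        fun x => if (⊤ : Fin (m + 1) → L) ≤ x then ⊤ else ⊥ with hE
      have hEgen : GenClone F E := ind_clone h01 hinf hchi _ htopne
      -- adjusted tuple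
      set c' : (Fin (m + 1) → L) → (Fin (m + 1) → L) :=
        fun c => if c = ⊥ then ⊤ else c with hc'
      have hc'ne : ∀ c, c' c ≠ ⊥ := by
        intro c
        by_cases h : c = ⊥ <;> simp [hc', h, htopne]
      -- the terms
      set T : (Fin (m + 1) → L) → (Fin (m + 1) → L) → L :=
        fun c x => oplus (A c) (E x) (if c' c ≤ x then ⊤ else ⊥) with hT
      have hTgen : ∀ c, GenClone F (T c) :=
        fun c => clOplus hop (A c) hEgen (ind_clone h01 hinf hchi _ (hc'ne c))
      have hne : (Finset.univ : Finset (Fin (m + 1) → L)).Nonempty :=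
        Finset.univ_nonempty
      have main : A = fun x => Finset.univ.sup' hne fun c => T c x := by
        funext x
        apply le_antisymm
        · refine le_trans ?_ (Finset.le_sup' (fun c => T c x) (Finset.mem_univ x))
          by_cases hx : x = ⊥
          · rw [hx, hbot]; exact bot_le
          · have hcx : c' x = x := if_neg hx
            simp only [hT, hcx, if_pos (le_refl x)]
            by_cases hEx : (⊤ : Fin (m + 1) → L) ≤ x
            · have : E x = ⊤ := if_pos hEx
              rw [this, oplus, if_pos ⟨rfl, rfl⟩]; exact le_top
            · have : E x = ⊥ := if_neg hEx
              rw [this, oplus, if_neg (fun h => h01 h.1),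
                if_neg (fun h => h01 h.2.symm)]
        · refine Finset.sup'_le _ _ fun c _ => ?_
          by_cases hEx : (⊤ : Fin (m + 1) → L) ≤ x
          · have hxt : x = ⊤ := top_le_iff.mp hEx
            rw [hxt, htop]; exact le_top
          · have hEb : E x = ⊥ := if_neg hEx
            simp only [hT, hEb]
            by_cases hcx : c' c ≤ x
            · rw [if_pos hcx, oplus, if_neg (fun h => h01 h.1),
                if_neg (fun h => h01 h.2.symm)]
              by_cases hcb : c = ⊥
              · rw [hcb, hbot]; exact bot_le
              · refine hmono ?_
                have h2 : (if c = ⊥ then (⊤ : Fin (m + 1) → L) else c) ≤ x := hcx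
                rwa [if_neg hcb] at h2
            · rw [if_neg hcx, oplus, if_neg (fun h => h01 h.1), if_pos ⟨rfl, rfl⟩]
              exact bot_le
      rw [main]
      exact clSup' hsup _ hne _ fun c _ => hTgen c

lemma genclone_isAgg (h01 : (⊥ : L) ≠ ⊤) {n : ℕ} {A : (Fin n → L) → L}
    (hF : ∀ p ∈ F, IsAgg p.2) (h : GenClone F A) : IsAgg A := by
  induction h with
  | mem p hp => exact hF p hp
  | proj i => exact ⟨fun x y h => h i, rfl, rfl⟩
  | comp f g hf hg ihf ihg =>
      refine ⟨fun x y hxy => ihf.1 (fun i => (ihg i).1 hxy), ?_, ?_⟩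
      · show f (fun i => g i ⊥) = ⊥
        have hg0 : (fun i => g i ⊥) = ⊥ := funext fun i => (ihg i).2.1
        rw [hg0, ihf.2.1]
      · show f (fun i => g i ⊤) = ⊤
        have hg1 : (fun i => g i ⊤) = ⊤ := funext fun i => (ihg i).2.2
        rw [hg1, ihf.2.2]

end Aux2

/-- Let `L` be a finite bounded lattice with `0 ≠ 1`.  The clone generated by the
lattice operations `∨` and `∧`, the unary functions `χ_a` (for `a ∈ L`) and the
binary functions `⊕_b` (for `b ∈ L`) equals the aggregation clone of `L`: an
operation of any arity belongs to it iff it is an aggregation function on `L`. -/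
theorem aggClone_generated {L : Type*} [Lattice L] [BoundedOrder L] [Fintype L]
    (h01 : (⊥ : L) ≠ ⊤) :
    ∀ (n : ℕ) (A : (Fin n → L) → L),
      GenClone ({⟨2, fun x => x 0 ⊔ x 1⟩, ⟨2, fun x => x 0 ⊓ x 1⟩} ∪
          {p | ∃ a : L, p = ⟨1, fun x => chi a (x 0)⟩} ∪
          {p | ∃ b : L, p = ⟨2, fun x => oplus b (x 0) (x 1)⟩}) A ↔
        IsAgg A := by
  intro n A
  set F : Set ((n : ℕ) × ((Fin n → L) → L)) :=
    ({⟨2, fun x => x 0 ⊔ x 1⟩, ⟨2, fun x => x 0 ⊓ x 1⟩} ∪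
      {p | ∃ a : L, p = ⟨1, fun x => chi a (x 0)⟩} ∪
      {p | ∃ b : L, p = ⟨2, fun x => oplus b (x 0) (x 1)⟩}) with hFdef
  have hF : ∀ p ∈ F, IsAgg p.2 := by
    rintro p (((rfl | rfl) | ⟨a, rfl⟩) | ⟨b, rfl⟩)
    · refine ⟨fun x y h => sup_le_sup (h 0) (h 1), ?_, ?_⟩ <;> simp
    · refine ⟨fun x y h => inf_le_inf (h 0) (h 1), ?_, ?_⟩ <;> simp
    · refine ⟨fun x y h => chi_mono a (h 0), ?_, ?_⟩
      · show chi a ⊥ = ⊥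
        rw [chi, if_neg (fun h => h.2 rfl)]
      · show chi a ⊤ = ⊤
        rw [chi, if_pos ⟨le_top, Ne.symm h01⟩]
    · refine ⟨fun x y h => oplus_mono b h01 (h 0) (h 1), ?_, ?_⟩
      · show oplus b ⊥ ⊥ = ⊥
        rw [oplus, if_neg (fun h => h01 h.1), if_pos ⟨rfl, rfl⟩]
      · show oplus b ⊤ ⊤ = ⊤
        rw [oplus, if_pos ⟨rfl, rfl⟩]
  constructor
  · exact genclone_isAgg h01 hF
  · intro hA
    refine isAgg_genclone h01 ?_ ?_ ?_ ?_ hA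
    · exact GenClone.mem ⟨2, fun x => x 0 ⊔ x 1⟩
        (Set.mem_union_left _ (Set.mem_union_left _ (Set.mem_insert _ _)))
    · exact GenClone.mem ⟨2, fun x => x 0 ⊓ x 1⟩
        (Set.mem_union_left _ (Set.mem_union_left _ (Set.mem_insert_of_mem _ rfl)))
    · exact fun a => GenClone.mem ⟨1, fun x => chi a (x 0)⟩
        (Set.mem_union_left _ (Set.mem_union_right _ ⟨a, rfl⟩))
    · exact fun b => GenClone.mem ⟨2, fun x => oplus b (x 0) (x 1)⟩
        (Set.mem_union_right _ ⟨b, rfl⟩)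
end
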